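/- Let Y be a symmetric invertible real n×n matrix and η a real number. Then the quadratic function E(x) = (1/2)·xᵀ Y⁻¹ x satisfies the past H∞ Hamilton–Jacobi–Bellman equation of the linear system ẋ = A x + B u, y = C x, i.e. ⟪Y⁻¹ x, A x⟫ + (1/2)·‖Bᵀ Y⁻¹ x‖² − (η/2)·‖C x‖² = 0 for all x ∈ ℝⁿ, if and only if Y satisfies the H∞ algebraic Riccati equation A Y + Y Aᵀ + B Bᵀ − η · Y Cᵀ C Y = 0. -/

import Mathlib

/-!
Substituting `x = Y z` (legitimate since `Y` is invertible) and using `Yᵀ = Y`, the HJB residual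
becomes the quadratic form `zᵀ N z` with `N = A Y + ½ B Bᵀ - (η/2) Y Cᵀ C Y`. A quadratic form
vanishes identically iff its matrix is skew-symmetric, and `N + Nᵀ` is exactly the Riccati
expression.
-/

open Matrix
open scoped RealInnerProductSpace

noncomputable section

def toEuc {n : ℕ} (v : Fin n → ℝ) : EuclideanSpace ℝ (Fin n) := WithLp.toLp 2 v

namespace Matrix

variable {ι κ R : Type*} [Fintype ι] [Fintype κ]

theorem mulVec_dotProduct_mulVec [CommSemiring R] (N M : Matrix κ ι R) (x y : ι → R) :
    N *ᵥ x ⬝ᵥ M *ᵥ y = x ⬝ᵥ (Nᵀ * M) *ᵥ y := by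
  rw [← mulVec_mulVec, dotProduct_mulVec x, vecMul_transpose]

theorem dotProduct_transpose_mulVec_self [CommSemiring R] (M : Matrix ι ι R) (x : ι → R) :
    x ⬝ᵥ Mᵀ *ᵥ x = x ⬝ᵥ M *ᵥ x := by
  rw [dotProduct_mulVec, vecMul_transpose, dotProduct_comm]

theorem single_dotProduct_mulVec_single [DecidableEq ι] [CommSemiring R] (M : Matrix ι ι R)
    (i j : ι) : Pi.single i 1 ⬝ᵥ M *ᵥ Pi.single j 1 = M i j := by
  simp [mulVec_single, single_dotProduct]

theorem forall_dotProduct_mulVec_self_eq_zero_iff [DecidableEq ι] [CommRing R]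
    [IsAddTorsionFree R] (M : Matrix ι ι R) :
    (∀ x, x ⬝ᵥ M *ᵥ x = 0) ↔ M + Mᵀ = 0 := by
  constructor
  · intro h
    ext i j
    -- polarization: test on `eᵢ + eⱼ`, where the diagonal terms already vanish
    have hij := h (Pi.single i 1 + Pi.single j 1)
    simp only [mulVec_add, dotProduct_add, add_dotProduct, single_dotProduct_mulVec_single,
      h (Pi.single i 1), h (Pi.single j 1)] at hij ⊢
    simpa [add_comm] using hij
  · intro h x
    have h2 := congrArg (fun N => x ⬝ᵥ N *ᵥ x) h
    simp only [add_mulVec, dotProduct_add, dotProduct_transpose_mulVec_self, zero_mulVec,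
      dotProduct_zero, ← two_nsmul] at h2
    exact nsmul_right_injective two_ne_zero (h2.trans (nsmul_zero 2).symm)

end Matrix

theorem inner_toEuc {n : ℕ} (u v : Fin n → ℝ) : ⟪toEuc u, toEuc v⟫ = u ⬝ᵥ v := by
  simp [toEuc, PiLp.inner_apply, dotProduct, mul_comm]

theorem norm_toEuc_sq {n : ℕ} (u : Fin n → ℝ) : ‖toEuc u‖ ^ 2 = u ⬝ᵥ u := by
  rw [← real_inner_self_eq_norm_sq, inner_toEuc]

section

variable {n m p : ℕ} (A : Matrix (Fin n) (Fin n) ℝ) (B : Matrix (Fin n) (Fin m) ℝ)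
  (C : Matrix (Fin p) (Fin n) ℝ) (η : ℝ)

def pastHJBMatrix (Y : Matrix (Fin n) (Fin n) ℝ) : Matrix (Fin n) (Fin n) ℝ :=
  A * Y + (1 / 2 : ℝ) • (B * Bᵀ) - (η / 2) • (Y * (Cᵀ * C) * Y)

variable {Y : Matrix (Fin n) (Fin n) ℝ}

theorem pastHJB_mulVec_eq_dotProduct (hY : Yᵀ = Y) (hYinv : Y⁻¹ * Y = 1) (z : Fin n → ℝ) :
    ⟪toEuc (Y⁻¹.mulVec (Y *ᵥ z)), toEuc (A.mulVec (Y *ᵥ z))⟫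
        + (1 / 2) * ‖toEuc (Bᵀ.mulVec (Y⁻¹.mulVec (Y *ᵥ z)))‖ ^ 2
        - (η / 2) * ‖toEuc (C.mulVec (Y *ᵥ z))‖ ^ 2 =
      z ⬝ᵥ pastHJBMatrix A B C η Y *ᵥ z := by
  rw [mulVec_mulVec, hYinv, one_mulVec, mulVec_mulVec _ A, mulVec_mulVec _ C, inner_toEuc,
    norm_toEuc_sq, norm_toEuc_sq, mulVec_dotProduct_mulVec, mulVec_dotProduct_mulVec]
  simp only [pastHJBMatrix, sub_mulVec, add_mulVec, smul_mulVec, dotProduct_sub, dotProduct_add,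
    dotProduct_smul, smul_eq_mul, transpose_transpose, transpose_mul, hY, Matrix.mul_assoc]

theorem riccati_eq_pastHJBMatrix_add_transpose (hY : Yᵀ = Y) :
    A * Y + Y * Aᵀ + B * Bᵀ - η • (Y * (Cᵀ * C) * Y) =
      pastHJBMatrix A B C η Y + (pastHJBMatrix A B C η Y)ᵀ := by
  simp only [pastHJBMatrix, transpose_sub, transpose_add, transpose_smul, transpose_mul,
    transpose_transpose, hY, Matrix.mul_assoc]
  module

end

/-- For a linear system, the quadratic ansatz `E(x) = (1/2) xᵀ Y⁻¹ x` with `Y`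
symmetric and invertible satisfies the past H∞ HJB equation
`⟪Y⁻¹x, Ax⟫ + (1/2)‖BᵀY⁻¹x‖² - (η/2)‖Cx‖² = 0` for all `x` iff `Y` solves the
H∞ filter algebraic Riccati equation `AY + YAᵀ + BBᵀ - η Y CᵀC Y = 0`
(Theorem 3). -/
theorem quadratic_solves_past_hjb_iff_riccati
    {n m p : ℕ}
    (A : Matrix (Fin n) (Fin n) ℝ) (B : Matrix (Fin n) (Fin m) ℝ)
    (C : Matrix (Fin p) (Fin n) ℝ) (η : ℝ)
    (Y : Matrix (Fin n) (Fin n) ℝ) (hY : Yᵀ = Y) (hYinv : IsUnit Y) :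
    (∀ x : EuclideanSpace ℝ (Fin n),
      ⟪toEuc (Y⁻¹.mulVec x), toEuc (A.mulVec x)⟫
        + (1 / 2) * ‖toEuc (Bᵀ.mulVec (Y⁻¹.mulVec x))‖ ^ 2
        - (η / 2) * ‖toEuc (C.mulVec x)‖ ^ 2 = 0) ↔
      A * Y + Y * Aᵀ + B * Bᵀ - η • (Y * (Cᵀ * C) * Y) = 0 := by
  have hYinv_mul : Y⁻¹ * Y = 1 := nonsing_inv_mul Y ((isUnit_iff_isUnit_det Y).mp hYinv)
  rw [riccati_eq_pastHJBMatrix_add_transpose A B C η hY,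
    ← forall_dotProduct_mulVec_self_eq_zero_iff, (WithLp.toLp_surjective 2).forall,
    (mulVec_surjective_iff_isUnit.mpr hYinv).forall]
  simp_rw [pastHJB_mulVec_eq_dotProduct A B C η hY hYinv_mul]
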